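/- Let A₁ ⊆ V₁, B₁ ⊆ W₁, A₂ ⊆ V₂, B₂ ⊆ W₂ and C ⊆ U be almost compact cones in finite-dimensional real vector spaces, let n > 0 be an integer, and let f : V₁ → W₁ and g : V₂ → W₂ be linear maps with f(A₁) ⊆ B₁, g(A₂) ⊆ B₂, closure(f(A₁)) = B₁ and closure(g(A₂)) = B₂. Then: (a) the closure of (f ⊗ g)(A₁ ⊗ A₂) equals B₁ ⊗ B₂; (b) the closure of f^(⊗n)(Symⁿ(A₁)) equals Symⁿ(B₁); (c) the precomposition map F ↦ F ∘ f from Hom(W₁,U) to Hom(V₁,U) is injective and satisfies {F : F ∘ f ∈ Hom(A₁,C)} = Hom(B₁,C), i.e. it is a strongly injective morphism from the cone Hom(B₁,C) to the cone Hom(A₁,C). -/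

import Mathlib

/-- A convex cone `C` in a finite-dimensional real vector space is an *almost compact cone*
if it is a convex cone that is closed, pointed (`C ∩ (−C) = {0}`) and full-dimensional
(nonempty interior). -/
def IsACCone {V : Type*} [NormedAddCommGroup V] [NormedSpace ℝ V] (C : Set V) : Prop :=
  (∀ x ∈ C, ∀ y ∈ C, x + y ∈ C) ∧
  (∀ c : ℝ, 0 ≤ c → ∀ x ∈ C, c • x ∈ C) ∧
  IsClosed C ∧
  C ∩ (-C) = {0} ∧
  (interior C).Nonempty

/-- The tensor product cone `C₁ ⊗ C₂`, realized inside `W` via the bilinear map `u`: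
all finite sums `∑ⱼ u (aⱼ) (bⱼ)` with `aⱼ ∈ C₁`, `bⱼ ∈ C₂`. -/
def bilinCone {V₁ V₂ W : Type*} [AddCommGroup V₁] [Module ℝ V₁] [AddCommGroup V₂]
    [Module ℝ V₂] [AddCommGroup W] [Module ℝ W]
    (u : V₁ →ₗ[ℝ] V₂ →ₗ[ℝ] W) (C₁ : Set V₁) (C₂ : Set V₂) : Set W :=
  {z | ∃ (k : ℕ) (a : Fin k → V₁) (b : Fin k → V₂),
    (∀ j, a j ∈ C₁) ∧ (∀ j, b j ∈ C₂) ∧ z = ∑ j, u (a j) (b j)}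

/-- The cone `Symⁿ(C)` realized via the symmetrization map `q`: all finite nonnegative
combinations of elements `q(v₁,…,vₙ)` with `vᵢ ∈ C`. -/
def symCone {V S : Type*} [AddCommGroup V] [Module ℝ V] [AddCommGroup S] [Module ℝ S]
    {n : ℕ} (q : MultilinearMap ℝ (fun _ : Fin n => V) S) (C : Set V) : Set S :=
  {s | ∃ (k : ℕ) (c : Fin k → ℝ) (v : Fin k → Fin n → V),
    (∀ j, 0 ≤ c j) ∧ (∀ j i, v j i ∈ C) ∧ s = ∑ j, c j • q (v j)}

/-!
Density passes from generators to the cones they generate. The generators `f a ⊗ g b` and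
`q (f ∘ v)` of the images are dense among the generators `b₁ ⊗ b₂` and `q w` of the target
cones, by continuity of the bilinear and multilinear maps in finite dimension; so the closure
of the image contains the target cone, and equality holds once the target cone is closed.

Closedness comes from compact bases. A closed salient cone `B` has a functional `φ` that
is positive on `B \ {0}` and whose slice `B ∩ {φ = 1}` is compact. The products of the slices
of `B₁` and `B₂` (resp. of `n` copies of the slice of `B₁`) form a compact set generating
`B₁ ⊗ B₂` (resp. `Symⁿ(B₁)`), on whose nonzero points the functional induced by `φ₁ ⊗ φ₂`
(resp. `φ^⊗n`) is `1`; and the cone over such a compact set is closed.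

For (c), `f` is surjective because the closure `B₁` of `f '' A₁` has interior, and `G ∘ f`
maps `A₁` into the closed cone `C` iff `G` maps `closure (f '' A₁) = B₁` into it.
-/

open Set Module
open scoped Pointwise

theorem MultilinearMap.continuous_of_finiteDimensional {𝕜 ι F : Type*} {E : ι → Type*}
    [NontriviallyNormedField 𝕜] [CompleteSpace 𝕜] [Fintype ι]
    [∀ i, NormedAddCommGroup (E i)] [∀ i, NormedSpace 𝕜 (E i)] [∀ i, FiniteDimensional 𝕜 (E i)]
    [AddCommGroup F] [Module 𝕜 F] [TopologicalSpace F] [ContinuousAdd F] [ContinuousSMul 𝕜 F]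
    (q : MultilinearMap 𝕜 E F) : Continuous q := by
  classical
  let b := fun i => Module.finBasis 𝕜 (E i)
  have hq : ⇑q = fun m => ∑ r : (i : ι) → Fin (finrank 𝕜 (E i)),
      (∏ i, (b i).coord (r i) (m i)) • q fun i => b i (r i) := by
    funext m
    conv_lhs => rw [show m = fun i => ∑ j, (b i).coord j (m i) • b i j from
      funext fun i => ((b i).sum_repr (m i)).symm]
    simp only [q.map_sum, q.map_smul_univ]
  rw [hq]
  exact continuous_finsetSum _ fun r _ => (continuous_finsetProd _ fun i _ =>
    ((b i).coord (r i)).continuous_of_finiteDimensional.comp (continuous_apply i)).smul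
      continuous_const

theorem LinearMap.continuous_uncurry_of_finiteDimensional {𝕜 E F G : Type*}
    [NontriviallyNormedField 𝕜] [CompleteSpace 𝕜]
    [NormedAddCommGroup E] [NormedSpace 𝕜 E] [FiniteDimensional 𝕜 E]
    [NormedAddCommGroup F] [NormedSpace 𝕜 F] [FiniteDimensional 𝕜 F]
    [NormedAddCommGroup G] [NormedSpace 𝕜 G] (u : E →ₗ[𝕜] F →ₗ[𝕜] G) :
    Continuous fun p : E × F => u p.1 p.2 :=
  (LinearMap.toContinuousLinearMap.toLinearMap ∘ₗ u).toContinuousLinearMap.continuous₂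

theorem TensorProduct.exists_compr₂_eq_of_injective_lift {K M N P Q : Type*} [Field K]
    [AddCommGroup M] [Module K M] [AddCommGroup N] [Module K N] [AddCommGroup P] [Module K P]
    [AddCommGroup Q] [Module K Q] {u : M →ₗ[K] N →ₗ[K] P} (hu : Function.Injective (lift u))
    (β : M →ₗ[K] N →ₗ[K] Q) : ∃ ψ : P →ₗ[K] Q, u.compr₂ ψ = β := by
  obtain ⟨l, hl⟩ := (lift u).exists_leftInverse_of_injective (LinearMap.ker_eq_bot.2 hu)
  refine ⟨lift β ∘ₗ l, LinearMap.ext₂ fun a b => ?_⟩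
  rw [LinearMap.compr₂_apply, ← lift.tmul a b (f' := u), LinearMap.comp_apply,
    ← LinearMap.comp_apply l, hl, LinearMap.id_apply, lift.tmul]

theorem LinearMap.surjective_of_nonempty_interior_closure_image {V W : Type*}
    [AddCommGroup V] [Module ℝ V] [NormedAddCommGroup W] [NormedSpace ℝ W] [FiniteDimensional ℝ W]
    (f : V →ₗ[ℝ] W) {A : Set V} (h : (interior (closure (f '' A))).Nonempty) :
    Function.Surjective f := by
  have hsub : closure (f '' A) ⊆ LinearMap.range f := by
    refine closure_minimal ?_ (Submodule.closed_of_finiteDimensional _)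
    rw [LinearMap.coe_range]
    exact image_subset_range _ _
  exact LinearMap.range_eq_top.1
    (Submodule.eq_top_of_nonempty_interior' _ (h.mono (interior_mono hsub)))

section FiniteDimensional

variable {E : Type*} [NormedAddCommGroup E] [NormedSpace ℝ E] [FiniteDimensional ℝ E]

-- Carathéodory: every point of the hull is a convex combination of at most `finrank ℝ E + 1`
-- points of `K`.
theorem IsCompact.convexHull {K : Set E} (hK : IsCompact K) :
    IsCompact (_root_.convexHull ℝ K) := by
  have hK' : _root_.convexHull ℝ K = ⋃ m ∈ Finset.range (finrank ℝ E + 2),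
      (fun p : (Fin m → ℝ) × (Fin m → E) => ∑ i, p.1 i • p.2 i) ''
        (stdSimplex ℝ (Fin m) ×ˢ univ.pi fun _ => K) := by
    refine Subset.antisymm (fun x hx => ?_) ?_
    · obtain ⟨ι, _, z, w, hzK, hz, hw₀, hw₁, rfl⟩ := eq_pos_convex_span_of_mem_convexHull hx
      have hcard : Fintype.card ι < finrank ℝ E + 2 :=
        Nat.lt_succ_of_le (hz.card_le_finrank_succ.trans (by simpa using Submodule.finrank_le _))
      let e := Fintype.equivFin ι
      refine mem_biUnion (Finset.mem_range.2 hcard) ⟨(w ∘ e.symm, z ∘ e.symm), ⟨⟨?_, ?_⟩, ?_⟩, ?_⟩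
      · exact fun i => (hw₀ _).le
      · simpa [e.symm.sum_comp w] using hw₁
      · exact fun i _ => hzK (mem_range_self _)
      · exact e.symm.sum_comp fun j => w j • z j
    · refine iUnion₂_subset fun m _ => ?_
      rintro _ ⟨⟨w, z⟩, ⟨hw, hz⟩, rfl⟩
      exact (convex_convexHull ℝ K).sum_mem (fun i _ => hw.1 i) hw.2
        fun i _ => subset_convexHull ℝ K (hz i trivial)
  rw [hK']
  exact (Finset.range _).isCompact_biUnion fun m _ =>
    ((isCompact_stdSimplex ℝ _).prod (isCompact_univ_pi fun _ => hK)).image (by fun_prop)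

namespace PointedCone

-- Separate `0` from the convex hull of the unit vectors of `C`; salience keeps `0` out of it.
theorem exists_mul_norm_le_of_salient (C : PointedCone ℝ E) (hC : IsClosed (C : Set E))
    (hsal : (C : ConvexCone ℝ E).Salient) :
    ∃ φ : E →ₗ[ℝ] ℝ, ∃ δ > 0, ∀ x ∈ C, δ * ‖x‖ ≤ φ x := by
  set S := (C : Set E) ∩ Metric.sphere 0 1
  have hS : IsCompact S := Metric.isCompact_of_isClosed_isBounded (hC.inter Metric.isClosed_sphere)
    (Metric.isBounded_sphere.subset inter_subset_right)
  have h0 : (0 : E) ∉ _root_.convexHull ℝ S := by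
    intro h
    obtain ⟨ι, _, z, w, hzS, -, hw₀, hw₁, hsum⟩ := eq_pos_convex_span_of_mem_convexHull h
    obtain ⟨i⟩ : Nonempty ι := by
      by_contra hι
      simp [not_nonempty_iff.1 hι] at hw₁
    have hzi : z i ∈ S := hzS (mem_range_self i)
    have hneg : -(w i • z i) ∈ C := by
      classical
      rw [← Finset.add_sum_erase _ _ (Finset.mem_univ i), add_eq_zero_iff_neg_eq] at hsum
      rw [hsum]
      exact C.sum_mem fun j _ => C.smul_mem (hw₀ j).le (hzS (mem_range_self j)).1
    refine hsal _ (C.smul_mem (hw₀ i).le hzi.1) ?_ hneg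
    exact smul_ne_zero (hw₀ i).ne' (ne_zero_of_mem_unit_sphere ⟨_, hzi.2⟩)
  obtain ⟨ψ, u, hu, hψ⟩ := geometric_hahn_banach_point_closed (convex_convexHull ℝ S)
    hS.convexHull.isClosed h0
  refine ⟨ψ.toLinearMap, u, by simpa using hu, fun x hx => ?_⟩
  rcases eq_or_ne x 0 with rfl | hx0
  · simp
  have hxS : ‖x‖⁻¹ • x ∈ S :=
    ⟨C.smul_mem (inv_nonneg.2 (norm_nonneg x)) hx, by simp [norm_smul, hx0]⟩
  have := hψ _ (subset_convexHull ℝ S hxS)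
  rw [map_smul, smul_eq_mul, lt_inv_mul_iff₀ (norm_pos_iff.2 hx0)] at this
  simpa [mul_comm] using this.le

-- `K` is the slice of `C` at height `φ = 1`, together with `0`.
theorem exists_isCompact_generating_of_salient (C : PointedCone ℝ E) (hC : IsClosed (C : Set E))
    (hsal : (C : ConvexCone ℝ E).Salient) :
    ∃ (φ : E →ₗ[ℝ] ℝ) (K : Set E), IsCompact K ∧ K ⊆ C ∧ (∀ x ∈ K, x ≠ 0 → φ x = 1) ∧
      ∀ x ∈ C, ∃ c : ℝ, 0 ≤ c ∧ ∃ k ∈ K, x = c • k := by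
  obtain ⟨φ, δ, hδ, hφ⟩ := C.exists_mul_norm_le_of_salient hC hsal
  have hbase : IsCompact ((C : Set E) ∩ φ ⁻¹' {1}) := by
    refine Metric.isCompact_of_isClosed_isBounded
      (hC.inter (isClosed_singleton.preimage φ.continuous_of_finiteDimensional)) ?_
    refine (Metric.isBounded_closedBall (x := (0 : E)) (r := δ⁻¹)).subset fun x hx => ?_
    rw [mem_closedBall_zero_iff, ← mul_one δ⁻¹, le_inv_mul_iff₀ hδ]
    exact (show φ x = 1 from hx.2) ▸ hφ x hx.1
  refine ⟨φ, insert 0 ((C : Set E) ∩ φ ⁻¹' {1}), hbase.insert 0,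
    insert_subset C.zero_mem inter_subset_left, fun x hx hx0 => (hx.resolve_left hx0).2,
    fun x hx => ?_⟩
  rcases eq_or_ne x 0 with rfl | hx0
  · exact ⟨0, le_rfl, 0, mem_insert _ _, by simp⟩
  have hφx : 0 < φ x := (mul_pos hδ (norm_pos_iff.2 hx0)).trans_le (hφ x hx)
  refine ⟨φ x, hφx.le, (φ x)⁻¹ • x, mem_insert_of_mem _ ⟨C.smul_mem (inv_nonneg.2 hφx.le) hx, ?_⟩,
    (smul_inv_smul₀ hφx.ne' x).symm⟩
  simp [hφx.ne']

-- Up to the factor `ψ z + 1`, the points `z` of the cone range over the compact set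
-- `convexHull ℝ (insert 0 K)`.
theorem isClosed_hull_of_isCompact {K : Set E} (hK : IsCompact K) {ψ : E →ₗ[ℝ] ℝ}
    (hψ : ∀ x ∈ K, x ≠ 0 → ψ x = 1) : IsClosed (hull ℝ K : Set E) := by
  set s := _root_.convexHull ℝ (insert 0 K)
  have hs : Convex ℝ s := convex_convexHull ℝ _
  have h0s : (0 : E) ∈ s := subset_convexHull ℝ _ (mem_insert 0 K)
  have hmem : ∀ z ∈ hull ℝ K, 0 ≤ ψ z ∧ z ∈ ψ z • s := by
    intro z hz
    induction hz using Submodule.span_induction with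
    | mem x hx =>
      rcases eq_or_ne x 0 with rfl | hx0
      · exact ⟨by simp, 0, h0s, by simp⟩
      · rw [hψ x hx hx0, one_smul]
        exact ⟨zero_le_one, subset_convexHull ℝ _ (mem_insert_of_mem 0 hx)⟩
    | zero => exact ⟨by simp, 0, h0s, by simp⟩
    | add x y _ _ hx hy =>
      rw [map_add, hs.add_smul hx.1 hy.1]
      exact ⟨add_nonneg hx.1 hy.1, add_mem_add hx.2 hy.2⟩
    | smul c x _ hx =>
      change 0 ≤ ψ ((c : ℝ) • x) ∧ (c : ℝ) • x ∈ ψ ((c : ℝ) • x) • s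
      rw [map_smul, smul_eq_mul, mul_smul]
      exact ⟨mul_nonneg c.2 hx.1, smul_mem_smul_set hx.2⟩
  have hψc : Continuous ψ := ψ.continuous_of_finiteDimensional
  have hcont : ContinuousOn (fun z => (ψ z + 1)⁻¹ • z) {z | 0 ≤ ψ z} :=
    ((hψc.add continuous_const).continuousOn.inv₀ fun z (hz : 0 ≤ ψ z) =>
      (show (0 : ℝ) < ψ z + 1 by linarith).ne').smul continuousOn_id
  convert hcont.preimage_isClosed_of_isClosed (isClosed_le continuous_const hψc)
    (hK.insert 0).convexHull.isClosed using 1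
  ext z
  constructor
  · intro hz
    obtain ⟨hψz, hzs⟩ := hmem z hz
    obtain ⟨y, hy, hzy⟩ := mem_smul_set.1 hzs
    have hpos : 0 < ψ z + 1 := by linarith
    refine ⟨hψz, ?_⟩
    have := hs.smul_mem_of_zero_mem h0s hy (t := (ψ z + 1)⁻¹ * ψ z)
      ⟨by positivity, (inv_mul_le_iff₀ hpos).2 (by linarith)⟩
    rwa [mul_smul, hzy] at this
  · rintro ⟨hψz, hz⟩
    have hpos : 0 < ψ z + 1 := by
      change 0 ≤ ψ z at hψz
      linarith
    have := (hull ℝ K).smul_mem hpos.le <|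
      convexHull_min (insert_subset (hull ℝ K).zero_mem subset_hull) (hull ℝ K).convex hz
    rwa [smul_inv_smul₀ hpos.ne'] at this

end PointedCone

end FiniteDimensional

namespace PointedCone

variable {E F : Type*} [AddCommGroup E] [Module ℝ E] [AddCommGroup F] [Module ℝ F]
  [TopologicalSpace F] [ContinuousAdd F] [ContinuousConstSMul ℝ F]

theorem closure_image_hull_eq (L : E →ₗ[ℝ] F) {S : Set E} {T : Set F} (hST : L '' S ⊆ T)
    (hTS : T ⊆ closure (L '' S)) (hT : IsClosed (hull ℝ T : Set F)) :
    closure (L '' hull ℝ S) = hull ℝ T := by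
  have hL : L '' hull ℝ S = hull ℝ (L '' S) := by
    rw [← coe_map]
    exact congrArg _ (Submodule.map_span _ _)
  rw [hL]
  refine (closure_minimal (Submodule.span_mono hST) hT).antisymm ?_
  rw [← coe_closure]
  exact Submodule.span_le.2 (hTS.trans (closure_mono subset_hull))

end PointedCone

theorem bilinCone_eq_hull {V₁ V₂ W : Type*} [AddCommGroup V₁] [Module ℝ V₁] [AddCommGroup V₂]
    [Module ℝ V₂] [AddCommGroup W] [Module ℝ W] (u : V₁ →ₗ[ℝ] V₂ →ₗ[ℝ] W) {C₁ : Set V₁}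
    (C₂ : Set V₂) (hC₁ : ∀ c : ℝ, 0 ≤ c → ∀ x ∈ C₁, c • x ∈ C₁) :
    bilinCone u C₁ C₂ = PointedCone.hull ℝ (image2 (fun a b => u a b) C₁ C₂) := by
  ext z
  constructor
  · rintro ⟨k, a, b, ha, hb, rfl⟩
    exact sum_mem fun j _ => PointedCone.subset_hull (mem_image2_of_mem (ha j) (hb j))
  · intro hz
    obtain ⟨k, c, g, rfl⟩ := Submodule.mem_span_set'.1 hz
    choose a ha b hb hab using fun j => (g j).2
    refine ⟨k, fun j => (c j : ℝ) • a j, b, fun j => hC₁ _ (c j).2 _ (ha j), hb, ?_⟩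
    simp_rw [← hab, map_smul, LinearMap.smul_apply]
    rfl

theorem symCone_eq_hull {V S : Type*} [AddCommGroup V] [Module ℝ V] [AddCommGroup S]
    [Module ℝ S] {n : ℕ} (q : MultilinearMap ℝ (fun _ : Fin n => V) S) (C : Set V) :
    symCone q C = PointedCone.hull ℝ (q '' univ.pi fun _ => C) := by
  ext z
  constructor
  · rintro ⟨k, c, v, hc, hv, rfl⟩
    exact sum_mem fun j _ => (PointedCone.hull ℝ _).smul_mem (hc j)
      (PointedCone.subset_hull ⟨v j, fun i _ => hv j i, rfl⟩)
  · intro hz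
    obtain ⟨k, c, g, rfl⟩ := Submodule.mem_span_set'.1 hz
    choose v hv hqv using fun j => (g j).2
    exact ⟨k, fun j => c j, v, fun j => (c j).2, fun j i => hv j i trivial, by simp_rw [hqv]; rfl⟩

namespace IsACCone

variable {V : Type*} [NormedAddCommGroup V] [NormedSpace ℝ V] {B : Set V}

def toPointedCone (hB : IsACCone B) : PointedCone ℝ V where
  carrier := B
  add_mem' ha hb := hB.1 _ ha _ hb
  zero_mem' := (hB.2.2.2.1.symm ▸ rfl : (0 : V) ∈ B ∩ -B).1
  smul_mem' c _ hx := hB.2.1 c c.2 _ hx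

theorem salient (hB : IsACCone B) : (hB.toPointedCone : ConvexCone ℝ V).Salient :=
  (PointedCone.salient_iff_inter_neg_eq_singleton _).2 (by exact hB.2.2.2.1)

end IsACCone

theorem isClosed_hull_image2_of_salient {W₁ W₂ Y : Type*}
    [NormedAddCommGroup W₁] [NormedSpace ℝ W₁] [FiniteDimensional ℝ W₁]
    [NormedAddCommGroup W₂] [NormedSpace ℝ W₂] [FiniteDimensional ℝ W₂]
    [NormedAddCommGroup Y] [NormedSpace ℝ Y] [FiniteDimensional ℝ Y]
    (B₁ : PointedCone ℝ W₁) (B₂ : PointedCone ℝ W₂) (hB₁ : IsClosed (B₁ : Set W₁))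
    (hB₁s : (B₁ : ConvexCone ℝ W₁).Salient) (hB₂ : IsClosed (B₂ : Set W₂))
    (hB₂s : (B₂ : ConvexCone ℝ W₂).Salient) {u : W₁ →ₗ[ℝ] W₂ →ₗ[ℝ] Y}
    (hu : Function.Injective (TensorProduct.lift u)) :
    IsClosed (PointedCone.hull ℝ (image2 (fun a b => u a b) B₁ B₂) : Set Y) := by
  obtain ⟨φ₁, K₁, hK₁, hK₁B, hφ₁, hB₁K⟩ := B₁.exists_isCompact_generating_of_salient hB₁ hB₁s
  obtain ⟨φ₂, K₂, hK₂, hK₂B, hφ₂, hB₂K⟩ := B₂.exists_isCompact_generating_of_salient hB₂ hB₂s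
  obtain ⟨ψ, hψ⟩ := TensorProduct.exists_compr₂_eq_of_injective_lift hu
    ((LinearMap.mul ℝ ℝ).compl₁₂ φ₁ φ₂)
  have hhull : PointedCone.hull ℝ (image2 (fun a b => u a b) B₁ B₂) =
      PointedCone.hull ℝ (image2 (fun a b => u a b) K₁ K₂) := by
    refine le_antisymm (Submodule.span_le.2 ?_) (Submodule.span_mono (image2_subset hK₁B hK₂B))
    rintro _ ⟨b₁, hb₁, b₂, hb₂, rfl⟩
    obtain ⟨c₁, hc₁, k₁, hk₁, rfl⟩ := hB₁K b₁ hb₁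
    obtain ⟨c₂, hc₂, k₂, hk₂, rfl⟩ := hB₂K b₂ hb₂
    dsimp only
    rw [map_smul, map_smul, LinearMap.smul_apply, smul_smul]
    exact (PointedCone.hull ℝ _).smul_mem (mul_nonneg hc₂ hc₁)
      (PointedCone.subset_hull (mem_image2_of_mem hk₁ hk₂))
  rw [hhull]
  refine PointedCone.isClosed_hull_of_isCompact (ψ := ψ) ?_ ?_
  · rw [← image_prod]
    exact (hK₁.prod hK₂).image u.continuous_uncurry_of_finiteDimensional
  · rintro _ ⟨k₁, hk₁, k₂, hk₂, rfl⟩ hne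
    have hk₁0 : k₁ ≠ 0 := by rintro rfl; simp at hne
    have hk₂0 : k₂ ≠ 0 := by rintro rfl; simp at hne
    rw [← LinearMap.compr₂_apply, hψ]
    simp [hφ₁ k₁ hk₁ hk₁0, hφ₂ k₂ hk₂ hk₂0]

theorem isClosed_hull_image_pi_of_salient {ι W S : Type*} [Fintype ι]
    [NormedAddCommGroup W] [NormedSpace ℝ W] [FiniteDimensional ℝ W]
    [NormedAddCommGroup S] [NormedSpace ℝ S] [FiniteDimensional ℝ S]
    (B : PointedCone ℝ W) (hB : IsClosed (B : Set W)) (hBs : (B : ConvexCone ℝ W).Salient)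
    {q : MultilinearMap ℝ (fun _ : ι => W) S}
    (hq : ∀ T : MultilinearMap ℝ (fun _ : ι => W) ℝ,
      (∀ (σ : Equiv.Perm ι) (v : ι → W), T (v ∘ σ) = T v) →
      ∃ t : S →ₗ[ℝ] ℝ, ∀ v, t (q v) = T v) :
    IsClosed (PointedCone.hull ℝ (q '' univ.pi fun _ => B) : Set S) := by
  obtain ⟨φ, K, hK, hKB, hφ, hBK⟩ := B.exists_isCompact_generating_of_salient hB hBs
  obtain ⟨ψ, hψ⟩ := hq ((MultilinearMap.mkPiAlgebra ℝ ι ℝ).compLinearMap fun _ => φ)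
    fun σ v => by simpa using Equiv.prod_comp σ fun i => φ (v i)
  have hhull : PointedCone.hull ℝ (q '' univ.pi fun _ => B) =
      PointedCone.hull ℝ (q '' univ.pi fun _ => K) := by
    refine le_antisymm (Submodule.span_le.2 ?_)
      (Submodule.span_mono (image_mono (pi_mono fun _ _ => hKB)))
    rintro _ ⟨w, hw, rfl⟩
    choose c hc k hk hwk using fun i => hBK (w i) (hw i trivial)
    rw [SetLike.mem_coe, funext hwk, q.map_smul_univ]
    exact (PointedCone.hull ℝ _).smul_mem (Finset.prod_nonneg fun i _ => hc i)
      (PointedCone.subset_hull ⟨k, fun i _ => hk i, rfl⟩)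
  rw [hhull]
  refine PointedCone.isClosed_hull_of_isCompact (ψ := ψ)
    ((isCompact_univ_pi fun _ => hK).image q.continuous_of_finiteDimensional) ?_
  rintro _ ⟨k, hk, rfl⟩ hne
  rw [hψ]
  simpa using Finset.prod_eq_one fun i _ => hφ _ (hk i trivial) fun h => hne (q.map_coord_zero i h)

theorem closure_image_bilinCone_eq {V₁ V₂ X W₁ W₂ Y : Type*}
    [AddCommGroup V₁] [Module ℝ V₁] [AddCommGroup V₂] [Module ℝ V₂] [AddCommGroup X] [Module ℝ X]
    [NormedAddCommGroup W₁] [NormedSpace ℝ W₁] [FiniteDimensional ℝ W₁]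
    [NormedAddCommGroup W₂] [NormedSpace ℝ W₂] [FiniteDimensional ℝ W₂]
    [NormedAddCommGroup Y] [NormedSpace ℝ Y] [FiniteDimensional ℝ Y]
    {A₁ : Set V₁} {A₂ : Set V₂} (hA₁ : ∀ c : ℝ, 0 ≤ c → ∀ x ∈ A₁, c • x ∈ A₁)
    (B₁ : PointedCone ℝ W₁) (B₂ : PointedCone ℝ W₂)
    (hB₁ : IsClosed (B₁ : Set W₁)) (hB₁s : (B₁ : ConvexCone ℝ W₁).Salient)
    (hB₂ : IsClosed (B₂ : Set W₂)) (hB₂s : (B₂ : ConvexCone ℝ W₂).Salient)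
    {f : V₁ →ₗ[ℝ] W₁} {g : V₂ →ₗ[ℝ] W₂} (hf : ∀ x ∈ A₁, f x ∈ B₁) (hg : ∀ x ∈ A₂, g x ∈ B₂)
    (hfd : closure (f '' A₁) = B₁) (hgd : closure (g '' A₂) = B₂)
    {uX : V₁ →ₗ[ℝ] V₂ →ₗ[ℝ] X} {uY : W₁ →ₗ[ℝ] W₂ →ₗ[ℝ] Y}
    (huY : Function.Injective (TensorProduct.lift uY))
    {F : X →ₗ[ℝ] Y} (hF : ∀ a b, F (uX a b) = uY (f a) (g b)) :
    closure (F '' bilinCone uX A₁ A₂) = bilinCone uY B₁ B₂ := by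
  have hFimage : F '' image2 (fun a b => uX a b) A₁ A₂ =
      image2 (fun a b => uY a b) (f '' A₁) (g '' A₂) := by
    simp only [image_image2, image2_image_left, image2_image_right, hF]
  rw [bilinCone_eq_hull uX A₂ hA₁, bilinCone_eq_hull uY B₂ fun c hc _ hx => B₁.smul_mem hc hx]
  refine PointedCone.closure_image_hull_eq F ?_ ?_
    (isClosed_hull_image2_of_salient B₁ B₂ hB₁ hB₁s hB₂ hB₂s huY)
  · rw [hFimage]
    exact image2_subset (image_subset_iff.2 hf) (image_subset_iff.2 hg)
  · rintro _ ⟨b₁, hb₁, b₂, hb₂, rfl⟩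
    rw [hFimage]
    exact map_mem_closure₂' (f := fun a b => uY a b)
      (fun a => (uY a).continuous_of_finiteDimensional)
      (fun b => (uY.flip b).continuous_of_finiteDimensional) (hfd ▸ hb₁) (hgd ▸ hb₂)
      fun a ha b hb => mem_image2_of_mem ha hb

theorem closure_image_symCone_eq {n : ℕ} {V W S₁ S₂ : Type*}
    [AddCommGroup V] [Module ℝ V] [AddCommGroup S₁] [Module ℝ S₁]
    [NormedAddCommGroup W] [NormedSpace ℝ W] [FiniteDimensional ℝ W]
    [NormedAddCommGroup S₂] [NormedSpace ℝ S₂] [FiniteDimensional ℝ S₂]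
    {A : Set V} (B : PointedCone ℝ W) (hB : IsClosed (B : Set W))
    (hBs : (B : ConvexCone ℝ W).Salient) {f : V →ₗ[ℝ] W} (hf : ∀ x ∈ A, f x ∈ B)
    (hfd : closure (f '' A) = B)
    {qV : MultilinearMap ℝ (fun _ : Fin n => V) S₁} {qW : MultilinearMap ℝ (fun _ : Fin n => W) S₂}
    (hqW : ∀ T : MultilinearMap ℝ (fun _ : Fin n => W) ℝ,
      (∀ (σ : Equiv.Perm (Fin n)) (v : Fin n → W), T (v ∘ σ) = T v) →
      ∃ t : S₂ →ₗ[ℝ] ℝ, ∀ v, t (qW v) = T v)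
    {Sf : S₁ →ₗ[ℝ] S₂} (hSf : ∀ v, Sf (qV v) = qW (f ∘ v)) :
    closure (Sf '' symCone qV A) = symCone qW B := by
  have hSfimage : Sf '' (qV '' univ.pi fun _ => A) = qW '' univ.pi fun _ => f '' A := by
    rw [image_image, ← piMap_image_univ_pi, image_image]
    exact image_congr fun v _ => hSf v
  rw [symCone_eq_hull, symCone_eq_hull]
  refine PointedCone.closure_image_hull_eq Sf ?_ ?_
    (isClosed_hull_image_pi_of_salient B hB hBs hqW)
  · rw [hSfimage]
    exact image_mono (pi_mono fun _ _ => image_subset_iff.2 hf)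
  · rintro _ ⟨w, hw, rfl⟩
    rw [hSfimage]
    refine image_closure_subset_closure_image qW.continuous_of_finiteDimensional ⟨w, ?_, rfl⟩
    rwa [closure_pi_set, hfd]
theorem dense_image_functoriality_general
    {V₁ W₁ V₂ W₂ U X Y S₁ S₂ : Type*}
    [NormedAddCommGroup V₁] [NormedSpace ℝ V₁]
    [NormedAddCommGroup W₁] [NormedSpace ℝ W₁] [FiniteDimensional ℝ W₁]
    [NormedAddCommGroup V₂] [NormedSpace ℝ V₂]
    [NormedAddCommGroup W₂] [NormedSpace ℝ W₂] [FiniteDimensional ℝ W₂]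
    [NormedAddCommGroup U] [NormedSpace ℝ U]
    [NormedAddCommGroup X] [NormedSpace ℝ X]
    [NormedAddCommGroup Y] [NormedSpace ℝ Y] [FiniteDimensional ℝ Y]
    [NormedAddCommGroup S₁] [NormedSpace ℝ S₁]
    [NormedAddCommGroup S₂] [NormedSpace ℝ S₂] [FiniteDimensional ℝ S₂]
    (A₁ : Set V₁) (B₁ : Set W₁) (A₂ : Set V₂) (B₂ : Set W₂) (C : Set U)
    (hA₁ : IsACCone A₁) (hB₁ : IsACCone B₁) (hB₂ : IsACCone B₂)
    (hC : IsACCone C)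
    (n : ℕ)
    (f : V₁ →ₗ[ℝ] W₁) (g : V₂ →ₗ[ℝ] W₂)
    (hf : ∀ x ∈ A₁, f x ∈ B₁) (hg : ∀ x ∈ A₂, g x ∈ B₂)
    (hfd : closure (f '' A₁) = B₁) (hgd : closure (g '' A₂) = B₂)
    -- `X` realizes `V₁ ⊗ V₂` and `Y` realizes `W₁ ⊗ W₂`
    (uX : V₁ →ₗ[ℝ] V₂ →ₗ[ℝ] X)
    (uY : W₁ →ₗ[ℝ] W₂ →ₗ[ℝ] Y) (huY : Function.Bijective (TensorProduct.lift uY))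
    -- `F` is `f ⊗ g`
    (F : X →ₗ[ℝ] Y) (hF : ∀ a b, F (uX a b) = uY (f a) (g b))
    -- `S₁` realizes `Symⁿ(V₁)` via the symmetric multilinear map `qV`
    (qV : MultilinearMap ℝ (fun _ : Fin n => V₁) S₁)
    -- `S₂` realizes `Symⁿ(W₁)` via the symmetric multilinear map `qW`
    (qW : MultilinearMap ℝ (fun _ : Fin n => W₁) S₂)
    (hqWuniv : ∀ (Z : Type) [AddCommGroup Z] [Module ℝ Z]
      (T : MultilinearMap ℝ (fun _ : Fin n => W₁) Z),
      (∀ (σ : Equiv.Perm (Fin n)) (v : Fin n → W₁), T (v ∘ σ) = T v) →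
      ∃! t : S₂ →ₗ[ℝ] Z, ∀ v : Fin n → W₁, t (qW v) = T v)
    -- `Sf` is `f^(⊗n)` restricted to symmetric tensors
    (Sf : S₁ →ₗ[ℝ] S₂) (hSf : ∀ v : Fin n → V₁, Sf (qV v) = qW (f ∘ v)) :
    closure (F '' bilinCone uX A₁ A₂) = bilinCone uY B₁ B₂ ∧
    closure (Sf '' symCone qV A₁) = symCone qW B₁ ∧
    (Function.Injective (fun G : W₁ →ₗ[ℝ] U => G.comp f) ∧
      {G : W₁ →ₗ[ℝ] U | ∀ x ∈ A₁, G (f x) ∈ C} = {G : W₁ →ₗ[ℝ] U | ∀ y ∈ B₁, G y ∈ C}) := by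
  refine ⟨closure_image_bilinCone_eq hA₁.2.1 hB₁.toPointedCone hB₂.toPointedCone hB₁.2.2.1
      hB₁.salient hB₂.2.2.1 hB₂.salient hf hg hfd hgd huY.1 hF,
    closure_image_symCone_eq hB₁.toPointedCone hB₁.2.2.1 hB₁.salient hf hfd
      (fun T hT => (hqWuniv ℝ T hT).exists) hSf, ?_, ?_⟩
  · have hsurj := f.surjective_of_nonempty_interior_closure_image (hfd ▸ hB₁.2.2.2.2)
    exact fun G G' h => (LinearMap.cancel_right hsurj).1 h
  · ext G
    rw [← hfd]
    change A₁ ⊆ f ⁻¹' (G ⁻¹' C) ↔ closure (f '' A₁) ⊆ G ⁻¹' C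
    rw [← image_subset_iff,
      (hC.2.2.1.preimage G.continuous_of_finiteDimensional).closure_subset_iff]

/-- Behavior of linearization functors under morphisms with dense image.  Given morphisms
`f : A₁ → B₁` and `g : A₂ → B₂` of almost compact cones with dense image:
(a) `f ⊗ g` (the map `F` between realizations `X`, `Y` of `V₁ ⊗ V₂`, `W₁ ⊗ W₂`) maps
`A₁ ⊗ A₂` onto a dense subset of `B₁ ⊗ B₂`;
(b) `Symⁿ(f)` (the map `Sf` between realizations `S₁`, `S₂` of the symmetric powers,
which are characterized by their universal properties) maps `Symⁿ(A₁)` onto a dense subset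
of `Symⁿ(B₁)`;
(c) precomposition with `f` is a strongly injective morphism
`Hom(B₁,C) → Hom(A₁,C)`: it is injective and `{F | F ∘ f ∈ Hom(A₁,C)} = Hom(B₁,C)`. -/
theorem dense_image_functoriality
    {V₁ W₁ V₂ W₂ U X Y S₁ S₂ : Type*}
    [NormedAddCommGroup V₁] [NormedSpace ℝ V₁] [FiniteDimensional ℝ V₁]
    [NormedAddCommGroup W₁] [NormedSpace ℝ W₁] [FiniteDimensional ℝ W₁]
    [NormedAddCommGroup V₂] [NormedSpace ℝ V₂] [FiniteDimensional ℝ V₂]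
    [NormedAddCommGroup W₂] [NormedSpace ℝ W₂] [FiniteDimensional ℝ W₂]
    [NormedAddCommGroup U] [NormedSpace ℝ U] [FiniteDimensional ℝ U]
    [NormedAddCommGroup X] [NormedSpace ℝ X] [FiniteDimensional ℝ X]
    [NormedAddCommGroup Y] [NormedSpace ℝ Y] [FiniteDimensional ℝ Y]
    [NormedAddCommGroup S₁] [NormedSpace ℝ S₁] [FiniteDimensional ℝ S₁]
    [NormedAddCommGroup S₂] [NormedSpace ℝ S₂] [FiniteDimensional ℝ S₂]
    (A₁ : Set V₁) (B₁ : Set W₁) (A₂ : Set V₂) (B₂ : Set W₂) (C : Set U)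
    (hA₁ : IsACCone A₁) (hB₁ : IsACCone B₁) (hA₂ : IsACCone A₂) (hB₂ : IsACCone B₂)
    (hC : IsACCone C)
    (n : ℕ) (hn : 0 < n)
    (f : V₁ →ₗ[ℝ] W₁) (g : V₂ →ₗ[ℝ] W₂)
    (hf : ∀ x ∈ A₁, f x ∈ B₁) (hg : ∀ x ∈ A₂, g x ∈ B₂)
    (hfd : closure (f '' A₁) = B₁) (hgd : closure (g '' A₂) = B₂)
    -- `X` realizes `V₁ ⊗ V₂` and `Y` realizes `W₁ ⊗ W₂`
    (uX : V₁ →ₗ[ℝ] V₂ →ₗ[ℝ] X) (huX : Function.Bijective (TensorProduct.lift uX))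
    (uY : W₁ →ₗ[ℝ] W₂ →ₗ[ℝ] Y) (huY : Function.Bijective (TensorProduct.lift uY))
    -- `F` is `f ⊗ g`
    (F : X →ₗ[ℝ] Y) (hF : ∀ a b, F (uX a b) = uY (f a) (g b))
    -- `S₁` realizes `Symⁿ(V₁)` via the symmetric multilinear map `qV`
    (qV : MultilinearMap ℝ (fun _ : Fin n => V₁) S₁)
    (hqVsymm : ∀ (σ : Equiv.Perm (Fin n)) (v : Fin n → V₁), qV (v ∘ σ) = qV v)
    (hqVuniv : ∀ (Z : Type) [AddCommGroup Z] [Module ℝ Z]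
      (T : MultilinearMap ℝ (fun _ : Fin n => V₁) Z),
      (∀ (σ : Equiv.Perm (Fin n)) (v : Fin n → V₁), T (v ∘ σ) = T v) →
      ∃! t : S₁ →ₗ[ℝ] Z, ∀ v : Fin n → V₁, t (qV v) = T v)
    -- `S₂` realizes `Symⁿ(W₁)` via the symmetric multilinear map `qW`
    (qW : MultilinearMap ℝ (fun _ : Fin n => W₁) S₂)
    (hqWsymm : ∀ (σ : Equiv.Perm (Fin n)) (v : Fin n → W₁), qW (v ∘ σ) = qW v)
    (hqWuniv : ∀ (Z : Type) [AddCommGroup Z] [Module ℝ Z]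
      (T : MultilinearMap ℝ (fun _ : Fin n => W₁) Z),
      (∀ (σ : Equiv.Perm (Fin n)) (v : Fin n → W₁), T (v ∘ σ) = T v) →
      ∃! t : S₂ →ₗ[ℝ] Z, ∀ v : Fin n → W₁, t (qW v) = T v)
    -- `Sf` is `f^(⊗n)` restricted to symmetric tensors
    (Sf : S₁ →ₗ[ℝ] S₂) (hSf : ∀ v : Fin n → V₁, Sf (qV v) = qW (f ∘ v)) :
    closure (F '' bilinCone uX A₁ A₂) = bilinCone uY B₁ B₂ ∧
    closure (Sf '' symCone qV A₁) = symCone qW B₁ ∧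
    (Function.Injective (fun G : W₁ →ₗ[ℝ] U => G.comp f) ∧
      {G : W₁ →ₗ[ℝ] U | ∀ x ∈ A₁, G (f x) ∈ C} = {G : W₁ →ₗ[ℝ] U | ∀ y ∈ B₁, G y ∈ C}) :=
  dense_image_functoriality_general A₁ B₁ A₂ B₂ C hA₁ hB₁ hB₂ hC n f g hf hg hfd hgd uX uY huY F hF
    qV qW hqWuniv Sf hSf
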